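/- arXiv:1309.1511 — 6 statements merged into one kernel-verified Lean document; each statement's English description precedes it below -/
import Mathlib

section
/- Let d₁, d₂, d₁', d₂', δ be real numbers with 0 ≤ d₂ ≤ d₁, 0 ≤ d₂' ≤ d₁', d₁ > 0, d₁' > 0, |d₁ − d₁'| ≤ δ and |d₂ − d₂'| ≤ δ. Then |sinh d₂ / sinh d₁ − sinh d₂' / sinh d₁'| ≤ 2·δ·e^δ·(cosh d₁' / sinh d₁'). -/
/-!
Writing `s = sinh`, the difference of the two ratios splits as
`s d₂ / s d₁ - s d₂' / s d₁' = (s d₂ / s d₁) (s d₁' - s d₁) / s d₁' + (s d₂ - s d₂') / s d₁'`,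
where `|s d₂ / s d₁| ≤ 1`. All four arguments lie in `[-(d₁' + δ), d₁' + δ]`, on which `sinh` is
`cosh (d₁' + δ)`-Lipschitz by the mean value theorem, and `cosh (d₁' + δ) ≤ e^δ cosh d₁'`.
-/

open Real

theorem norm_div_sub_div_le {𝕜 : Type*} [NormedField 𝕜] {x₁ x₂ y₁ y₂ : 𝕜}
    (hx : ‖x₂‖ ≤ ‖x₁‖) (hy : y₁ ≠ 0) :
    ‖x₂ / x₁ - y₂ / y₁‖ ≤ (‖x₁ - y₁‖ + ‖x₂ - y₂‖) / ‖y₁‖ := by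
  have hx_zero : x₁ = 0 → x₂ = 0 := fun h ↦ norm_le_zero_iff.1 (by simpa [h] using hx)
  have hsplit : x₂ / x₁ - y₂ / y₁ = x₂ / x₁ * ((y₁ - x₁) / y₁) + (x₂ - y₂) / y₁ := by
    rw [mul_div_assoc', mul_sub, div_mul_cancel_of_imp hx_zero]
    field_simp
    ring
  have hratio : ‖x₂ / x₁‖ ≤ 1 := by
    rw [norm_div]
    exact div_le_one_of_le₀ hx (norm_nonneg _)
  calc ‖x₂ / x₁ - y₂ / y₁‖
      ≤ ‖x₂ / x₁‖ * (‖y₁ - x₁‖ / ‖y₁‖) + ‖x₂ - y₂‖ / ‖y₁‖ := by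
        rw [hsplit, ← norm_div, ← norm_div, ← norm_mul]
        exact norm_add_le _ _
    _ ≤ 1 * (‖y₁ - x₁‖ / ‖y₁‖) + ‖x₂ - y₂‖ / ‖y₁‖ := by gcongr
    _ = (‖x₁ - y₁‖ + ‖x₂ - y₂‖) / ‖y₁‖ := by rw [norm_sub_rev, one_mul, add_div]

namespace Real

theorem abs_sinh_sub_sinh_le {a b M : ℝ} (ha : |a| ≤ M) (hb : |b| ≤ M) :
    |sinh a - sinh b| ≤ cosh M * |a - b| := by
  have hM : |M| = M := abs_of_nonneg ((abs_nonneg a).trans ha)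
  have hmem : ∀ {x : ℝ}, |x| ≤ M → x ∈ Set.Icc (-M) M := fun hx ↦ abs_le.1 hx
  refine (convex_Icc (-M) M).norm_image_sub_le_of_norm_hasDerivWithin_le
    (fun x _ ↦ (hasDerivAt_sinh x).hasDerivWithinAt) (fun x hx ↦ ?_) (hmem hb) (hmem ha)
  rw [norm_eq_abs, abs_of_pos (cosh_pos x), cosh_le_cosh, hM]
  exact abs_le.2 hx

theorem cosh_add_le_exp_abs_mul_cosh (x y : ℝ) : cosh (x + y) ≤ exp |y| * cosh x := by
  have hpos : exp (x + y) ≤ exp |y| * exp x := by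
    rw [← exp_add]
    exact exp_le_exp.2 (by linarith [le_abs_self y])
  have hneg : exp (-(x + y)) ≤ exp |y| * exp (-x) := by
    rw [← exp_add]
    exact exp_le_exp.2 (by linarith [neg_abs_le y])
  rw [cosh_eq, cosh_eq]
  linarith

end Real

theorem sinh_ratio_perturbation_general
    (d₁ d₂ d₁' d₂' δ : ℝ)
    (h2 : 0 ≤ d₂) (h21 : d₂ ≤ d₁)
    (h2' : 0 ≤ d₂') (h21' : d₂' ≤ d₁')
    (h1' : 0 < d₁')
    (hd1 : |d₁ - d₁'| ≤ δ) (hd2 : |d₂ - d₂'| ≤ δ) :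
    |Real.sinh d₂ / Real.sinh d₁ - Real.sinh d₂' / Real.sinh d₁'| ≤
      2 * δ * Real.exp δ * (Real.cosh d₁' / Real.sinh d₁') := by
  have hδ : 0 ≤ δ := (abs_nonneg _).trans hd1
  obtain ⟨hd1_lo, hd1_hi⟩ := abs_le.1 hd1
  obtain ⟨hd2_lo, hd2_hi⟩ := abs_le.1 hd2
  have hbound : ∀ x : ℝ, 0 ≤ x → x ≤ d₁' + δ → |x| ≤ d₁' + δ :=
    fun x h₀ h ↦ (abs_of_nonneg h₀).trans_le h
  have hsinh₁ : |sinh d₁ - sinh d₁'| ≤ cosh (d₁' + δ) * δ :=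
    (abs_sinh_sub_sinh_le (hbound d₁ (by linarith) (by linarith))
      (hbound d₁' h1'.le (by linarith))).trans (by gcongr)
  have hsinh₂ : |sinh d₂ - sinh d₂'| ≤ cosh (d₁' + δ) * δ :=
    (abs_sinh_sub_sinh_le (hbound d₂ h2 (by linarith))
      (hbound d₂' h2' (by linarith))).trans (by gcongr)
  have hcosh : cosh (d₁' + δ) ≤ exp δ * cosh d₁' := by
    simpa only [abs_of_nonneg hδ] using cosh_add_le_exp_abs_mul_cosh d₁' δ
  have hsinh_pos : 0 < sinh d₁' := sinh_pos_iff.2 h1'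
  have hratio : |sinh d₂| ≤ |sinh d₁| := by
    rw [abs_sinh, abs_sinh, sinh_le_sinh]
    exact abs_le_abs_of_nonneg h2 h21
  calc |sinh d₂ / sinh d₁ - sinh d₂' / sinh d₁'|
      ≤ (|sinh d₁ - sinh d₁'| + |sinh d₂ - sinh d₂'|) / |sinh d₁'| :=
        norm_div_sub_div_le hratio hsinh_pos.ne'
    _ ≤ (cosh (d₁' + δ) * δ + cosh (d₁' + δ) * δ) / sinh d₁' := by
        rw [abs_of_pos hsinh_pos]
        gcongr
    _ ≤ (exp δ * cosh d₁' * δ + exp δ * cosh d₁' * δ) / sinh d₁' := by gcongr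
    _ = 2 * δ * exp δ * (cosh d₁' / sinh d₁') := by ring

theorem sinh_ratio_perturbation
    (d₁ d₂ d₁' d₂' δ : ℝ)
    (h2 : 0 ≤ d₂) (h21 : d₂ ≤ d₁)
    (h2' : 0 ≤ d₂') (h21' : d₂' ≤ d₁')
    (h1 : 0 < d₁) (h1' : 0 < d₁')
    (hd1 : |d₁ - d₁'| ≤ δ) (hd2 : |d₂ - d₂'| ≤ δ) :
    |Real.sinh d₂ / Real.sinh d₁ - Real.sinh d₂' / Real.sinh d₁'| ≤
      2 * δ * Real.exp δ * (Real.cosh d₁' / Real.sinh d₁') :=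
  sinh_ratio_perturbation_general d₁ d₂ d₁' d₂' δ h2 h21 h2' h21' h1' hd1 hd2
end

section
/- There exist constants C > 0 and R₀ > 0 such that for every real R ≥ R₀ and all complex numbers a, b, c with |a − R/2| ≤ 1, |b − R/2| ≤ 1 and |c − R/2| ≤ 1, one has |(cosh a + cosh b·cosh c)/(sinh b·sinh c) − 1 − 2·exp(a − b − c)| ≤ C·exp(−R). -/
/-!
Factor `sinh b * sinh c = e^{b+c} (1 - e^{-2b}) (1 - e^{-2c}) / 4` out of the cosine-law ratio.
Up to the main term `1 + 2 e^{a-b-c}`, what remains is an exact rational expression in the four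
exponentials `e^{-a-b-c}`, `e^{-2b}`, `e^{-2c}` (all of size `O(e^{-R})` when `a, b, c ≈ R/2`) and
`e^{a-b-c}` (of size `O(e^{-R/2})`), with every term of the numerator carrying one of the small
factors, so the whole remainder is `O(e^{-R})`.
-/

open Complex

noncomputable def hexagonRemainder (t u v w : ℂ) : ℂ :=
  2 * (t + u + v + w * (u + v - u * v)) / ((1 - u) * (1 - v))

theorem exp_neg_two_mul (z : ℂ) : exp (-2 * z) = (exp z ^ 2)⁻¹ := by
  rw [neg_mul, exp_neg, ← exp_nat_mul]
  norm_num

theorem cosh_add_cosh_mul_cosh_div_sinh_mul_sinh_sub (a b c : ℂ) (hb : exp (-2 * b) ≠ 1)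
    (hc : exp (-2 * c) ≠ 1) :
    (cosh a + cosh b * cosh c) / (sinh b * sinh c) - 1 - 2 * exp (a - b - c) =
      hexagonRemainder (exp (-a - b - c)) (exp (-2 * b)) (exp (-2 * c)) (exp (a - b - c)) := by
  simp only [hexagonRemainder, exp_neg_two_mul] at hb hc ⊢
  have hB : exp b ^ 2 - 1 ≠ 0 := fun h => hb (by rw [sub_eq_zero.mp h, inv_one])
  have hC : exp c ^ 2 - 1 ≠ 0 := fun h => hc (by rw [sub_eq_zero.mp h, inv_one])
  have ha₀ := exp_ne_zero a
  have hb₀ := exp_ne_zero b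
  have hc₀ := exp_ne_zero c
  simp only [cosh, sinh, exp_sub, exp_neg]
  field_simp
  ring

theorem norm_hexagonRemainder_le {t u v w : ℂ} {δ : ℝ} (ht : ‖t‖ ≤ δ) (hu : ‖u‖ ≤ δ)
    (hv : ‖v‖ ≤ δ) (hw : ‖w‖ ≤ 1) (hδ : δ ≤ 1 / 2) :
    ‖hexagonRemainder t u v w‖ ≤ 48 * δ := by
  have hδ₀ : 0 ≤ δ := (norm_nonneg t).trans ht
  have hcross : ‖u + v - u * v‖ ≤ 3 * δ :=
    calc ‖u + v - u * v‖ ≤ ‖u‖ + ‖v‖ + ‖u‖ * ‖v‖ := by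
          grw [norm_sub_le, norm_add_le, norm_mul]
      _ ≤ δ + δ + δ * δ := by gcongr
      _ ≤ 3 * δ := by nlinarith
  have hnum : ‖t + u + v + w * (u + v - u * v)‖ ≤ 6 * δ :=
    calc ‖t + u + v + w * (u + v - u * v)‖ ≤ ‖t‖ + ‖u‖ + ‖v‖ + ‖w‖ * ‖u + v - u * v‖ := by
          grw [norm_add_le, norm_add_le, norm_add_le, norm_mul]
      _ ≤ δ + δ + δ + 1 * (3 * δ) := by gcongr
      _ = 6 * δ := by ring
  have hfactor : ∀ z : ℂ, ‖z‖ ≤ δ → 1 / 2 ≤ ‖1 - z‖ := fun z hz => by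
    have h := norm_sub_norm_le (1 : ℂ) z
    rw [norm_one] at h
    linarith
  have hden : 1 / 4 ≤ ‖(1 - u) * (1 - v)‖ := by
    rw [norm_mul]
    nlinarith [hfactor u hu, hfactor v hv]
  rw [hexagonRemainder, norm_div, norm_mul, Complex.norm_two, div_le_iff₀ (by linarith)]
  nlinarith

theorem norm_exp_le_of_re_le {z : ℂ} {r : ℝ} (h : z.re ≤ r) : ‖exp z‖ ≤ Real.exp r := by
  rw [norm_exp]
  exact Real.exp_le_exp.mpr h

theorem abs_re_sub_le_of_norm_sub_le {z : ℂ} {x r : ℝ} (h : ‖z - x‖ ≤ r) : |z.re - x| ≤ r := by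
  simpa using (abs_re_le_norm (z - x)).trans h

theorem hexagon_cosine_law_asymptotic :
    ∃ C > (0 : ℝ), ∃ R₀ > (0 : ℝ), ∀ R : ℝ, R₀ ≤ R →
      ∀ a b c : ℂ,
        ‖a - (R : ℂ) / 2‖ ≤ 1 →
        ‖b - (R : ℂ) / 2‖ ≤ 1 →
        ‖c - (R : ℂ) / 2‖ ≤ 1 →
        ‖(Complex.cosh a + Complex.cosh b * Complex.cosh c) /
            (Complex.sinh b * Complex.sinh c) - 1 - 2 * Complex.exp (a - b - c)‖ ≤
          C * Real.exp (-R) := by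
  refine ⟨48 * Real.exp 2, by positivity, 6, by norm_num, fun R hR a b c ha hb hc => ?_⟩
  have hre : ∀ z : ℂ, ‖z - (R : ℂ) / 2‖ ≤ 1 → |z.re - R / 2| ≤ 1 := fun z hz =>
    abs_re_sub_le_of_norm_sub_le (by push_cast; exact hz)
  obtain ⟨ha₁, ha₂⟩ := abs_le.mp (hre a ha)
  obtain ⟨hb₁, hb₂⟩ := abs_le.mp (hre b hb)
  obtain ⟨hc₁, hc₂⟩ := abs_le.mp (hre c hc)
  have hδ : Real.exp (2 - R) ≤ 1 / 2 :=
    (Real.exp_le_exp.mpr (by linarith)).trans Real.exp_neg_one_lt_half.le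
  have hre_neg_two_mul : ∀ z : ℂ, (-2 * z).re = -2 * z.re := fun z => by simp
  have hu : ‖exp (-2 * b)‖ ≤ Real.exp (2 - R) :=
    norm_exp_le_of_re_le (by rw [hre_neg_two_mul]; linarith)
  have hv : ‖exp (-2 * c)‖ ≤ Real.exp (2 - R) :=
    norm_exp_le_of_re_le (by rw [hre_neg_two_mul]; linarith)
  have ht : ‖exp (-a - b - c)‖ ≤ Real.exp (2 - R) :=
    norm_exp_le_of_re_le (by simp only [sub_re, neg_re]; linarith)
  have hw : ‖exp (a - b - c)‖ ≤ 1 :=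
    (norm_exp_le_of_re_le (r := 0) (by simp only [sub_re]; linarith)).trans_eq Real.exp_zero
  have hne_one : ∀ z : ℂ, ‖z‖ ≤ Real.exp (2 - R) → z ≠ 1 := fun z hz h => by
    rw [h, norm_one] at hz
    linarith
  rw [cosh_add_cosh_mul_cosh_div_sinh_mul_sinh_sub a b c (hne_one _ hu) (hne_one _ hv),
    mul_assoc, ← Real.exp_add, ← sub_eq_add_neg]
  exact norm_hexagonRemainder_le ht hu hv hw hδ
end

section
/- There exists R₀ > 0 such that for every real R ≥ R₀, one has (cosh²R − 1)/(cosh²R·cosh²(e^{−R/4}) − 1) ≤ 1 − (1/2)·e^{−R/2}. -/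
/-! Since `sinh x ≥ x`, we have `cosh² x ≥ 1 + x²`. Replacing `cosh²(e^{-R/4})` by `1 + y` with
`y = e^{-R/2}` only increases the ratio, and
`(1 - y/2)(c(1 + y) - 1) = (c - 1) + (y/2)(c(1 - y) + 1) ≥ c - 1` for `c = cosh² R ≥ 1`, `y ≤ 1`. -/

open Real

lemma Real.sq_le_sinh_sq (x : ℝ) : x ^ 2 ≤ sinh x ^ 2 := by
  rw [← sq_abs x, ← sq_abs (sinh x), abs_sinh]
  gcongr
  exact self_le_sinh_iff.2 (abs_nonneg x)

lemma Real.one_add_sq_le_cosh_sq (x : ℝ) : 1 + x ^ 2 ≤ cosh x ^ 2 := by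
  rw [cosh_sq']
  linarith [sq_le_sinh_sq x]

lemma Real.div_mul_cosh_sq_sub_one_le {c x : ℝ} (hc : 1 ≤ c) (hx : x ^ 2 ≤ 1) :
    (c - 1) / (c * cosh x ^ 2 - 1) ≤ 1 - x ^ 2 / 2 := by
  have hcosh : c * (1 + x ^ 2) ≤ c * cosh x ^ 2 :=
    mul_le_mul_of_nonneg_left (one_add_sq_le_cosh_sq x) (by linarith)
  have hx2 : 0 ≤ x ^ 2 := sq_nonneg x
  refine div_le_of_le_mul₀ (by nlinarith) (by linarith) ?_
  calc c - 1 ≤ (c - 1) + x ^ 2 / 2 * (c * (1 - x ^ 2) + 1) := by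
        have : 0 ≤ c * (1 - x ^ 2) := by nlinarith
        nlinarith
    _ = (1 - x ^ 2 / 2) * (c * (1 + x ^ 2) - 1) := by ring
    _ ≤ (1 - x ^ 2 / 2) * (c * cosh x ^ 2 - 1) := by gcongr; linarith

theorem cosh_sq_ratio_bound :
    ∃ R₀ > (0 : ℝ), ∀ R : ℝ, R₀ ≤ R →
      (Real.cosh R ^ 2 - 1) /
          (Real.cosh R ^ 2 * Real.cosh (Real.exp (-R / 4)) ^ 2 - 1) ≤
        1 - (1 / 2) * Real.exp (-R / 2) := by
  refine ⟨1, one_pos, fun R hR => ?_⟩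
  have hsq : Real.exp (-R / 4) ^ 2 = Real.exp (-R / 2) := by
    rw [← Real.exp_nat_mul]
    ring_nf
  have hc : 1 ≤ Real.cosh R ^ 2 := one_le_pow₀ (one_le_cosh R)
  have hy : Real.exp (-R / 4) ^ 2 ≤ 1 := by
    rw [hsq, exp_le_one_iff]
    linarith
  calc _ ≤ 1 - Real.exp (-R / 4) ^ 2 / 2 := div_mul_cosh_sq_sub_one_le hc hy
    _ = _ := by rw [hsq]; ring
end

section
/- For all real numbers R > 0, ε > 0, every real s with 0 ≤ s ≤ 1 − (1/2)·e^{−R/2}, and every real ξ with |ξ| ≤ (4ε/R)·e^{−R/4}, one has sin²ξ ≤ (32·ε²/R²)·(1 − s·cos²ξ). -/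
open Real

theorem sin_sq_xi_bound_general
    (R ε s ξ : ℝ)
    (hs0 : 0 ≤ s) (hs1 : s ≤ 1 - (1 / 2) * Real.exp (-R / 2))
    (hξ : |ξ| ≤ (4 * ε / R) * Real.exp (-R / 4)) :
    Real.sin ξ ^ 2 ≤ (32 * ε ^ 2 / R ^ 2) * (1 - s * Real.cos ξ ^ 2) := by
  have hexp : Real.exp (-R / 4) ^ 2 = Real.exp (-R / 2) := by
    rw [← Real.exp_nat_mul]; ring_nf
  have hcos : 1 - s ≤ 1 - s * Real.cos ξ ^ 2 :=
    sub_le_sub_left (mul_le_of_le_one_right hs0 (cos_sq_le_one ξ)) 1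
  calc Real.sin ξ ^ 2 ≤ ξ ^ 2 := sin_sq_le_sq
    _ ≤ ((4 * ε / R) * Real.exp (-R / 4)) ^ 2 := sq_le_sq.mpr (hξ.trans (le_abs_self _))
    _ = (32 * ε ^ 2 / R ^ 2) * ((1 / 2) * Real.exp (-R / 2)) := by rw [mul_pow, hexp]; ring
    _ ≤ (32 * ε ^ 2 / R ^ 2) * (1 - s * Real.cos ξ ^ 2) := by gcongr; linarith

theorem sin_sq_xi_bound
    (R ε s ξ : ℝ) (hR : 0 < R) (hε : 0 < ε)
    (hs0 : 0 ≤ s) (hs1 : s ≤ 1 - (1 / 2) * Real.exp (-R / 2))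
    (hξ : |ξ| ≤ (4 * ε / R) * Real.exp (-R / 4)) :
    Real.sin ξ ^ 2 ≤ (32 * ε ^ 2 / R ^ 2) * (1 - s * Real.cos ξ ^ 2) :=
  sin_sq_xi_bound_general R ε s ξ hs0 hs1 hξ
end

section
/- For all real numbers L, d, l, θ with 0 < L ≤ 1/100, 0 ≤ d ≤ 2L, 0 ≤ l ≤ 2L and |θ| ≤ 10L, one has sinh d·cosh l + cosh d·sinh l·sin θ ≤ sinh d + 100·L·l. -/
/-! On the range in question `sinh x ≤ 3x/2` and `cosh x ≤ 1 + x²`. Writing the left side as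
`sinh d + sinh d (cosh l - 1) + cosh d sinh l sin θ`, the middle term is cubically small and the
last is at most `2 · (3l/2) · 10L = 30 L l`, well within the budget `100 L l`. -/

open Real

namespace Real

lemma sinh_le_three_halves_mul {x : ℝ} (hx0 : 0 ≤ x) (hx1 : x ≤ 1) : sinh x ≤ 3 / 2 * x := by
  have hexp : exp x - 1 ≤ 2 * x := by
    have h := abs_exp_sub_one_le (x := x) (by rwa [abs_of_nonneg hx0])
    rw [abs_of_nonneg hx0] at h
    linarith [le_abs_self (exp x - 1)]
  have hexp_neg : 1 - exp (-x) ≤ x := by linarith [add_one_le_exp (-x)]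
  rw [sinh_eq]
  linarith

lemma cosh_sub_one_le_sq {x : ℝ} (hx : x ^ 2 ≤ 2) : cosh x - 1 ≤ x ^ 2 := by
  have h := abs_exp_sub_one_le (x := x ^ 2 / 2)
    (by rw [abs_of_nonneg (by positivity)]; linarith)
  rw [abs_of_nonneg (by positivity : 0 ≤ x ^ 2 / 2)] at h
  linarith [cosh_le_exp_half_sq x, le_abs_self (exp (x ^ 2 / 2) - 1)]

end Real

theorem sinh_increment_bound_general
    (L d l θ : ℝ) (hL : L ≤ 1 / 100)
    (hd0 : 0 ≤ d) (hd : d ≤ 2 * L)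
    (hl0 : 0 ≤ l) (hl : l ≤ 2 * L)
    (hθ : |θ| ≤ 10 * L) :
    Real.sinh d * Real.cosh l + Real.cosh d * Real.sinh l * Real.sin θ ≤
      Real.sinh d + 100 * L * l := by
  have hL0 : 0 ≤ L := by linarith
  have hsinh_d : sinh d ≤ 3 / 2 * d := sinh_le_three_halves_mul hd0 (by linarith)
  have hsinh_l : sinh l ≤ 3 / 2 * l := sinh_le_three_halves_mul hl0 (by linarith)
  have hcosh_d : cosh d ≤ 2 := by nlinarith [cosh_sub_one_le_sq (x := d) (by nlinarith)]
  have hcosh_l : cosh l - 1 ≤ l ^ 2 := cosh_sub_one_le_sq (by nlinarith)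
  have hsin : sin θ ≤ 10 * L := (le_abs_self _).trans (abs_sin_le_abs.trans hθ)
  have hcross : cosh d * sinh l * sin θ ≤ 30 * L * l :=
    calc cosh d * sinh l * sin θ ≤ cosh d * sinh l * (10 * L) :=
          mul_le_mul_of_nonneg_left hsin (by positivity)
      _ ≤ 2 * (3 / 2 * l) * (10 * L) := by gcongr
      _ = 30 * L * l := by ring
  calc sinh d * cosh l + cosh d * sinh l * sin θ
      = sinh d + sinh d * (cosh l - 1) + cosh d * sinh l * sin θ := by ring
    _ ≤ sinh d + 3 / 2 * d * l ^ 2 + 30 * L * l := by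
      gcongr
      linarith [one_le_cosh l]
    _ ≤ sinh d + 100 * L * l := by nlinarith [mul_nonneg hd0 hl0]

theorem sinh_increment_bound
    (L d l θ : ℝ) (hL0 : 0 < L) (hL : L ≤ 1 / 100)
    (hd0 : 0 ≤ d) (hd : d ≤ 2 * L)
    (hl0 : 0 ≤ l) (hl : l ≤ 2 * L)
    (hθ : |θ| ≤ 10 * L) :
    Real.sinh d * Real.cosh l + Real.cosh d * Real.sinh l * Real.sin θ ≤
      Real.sinh d + 100 * L * l :=
  sinh_increment_bound_general L d l θ hL hd0 hd hl0 hl hθ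
end

section
/- Let p ≥ 2 be a natural number and let S be the additive subgroup of ℤ × ZMod p generated by the two elements ((p : ℤ), (0 : ZMod p)) and ((2 : ℤ), (-1 : ZMod p)). Then for every x : ZMod p, the element ((0 : ℤ), x) belongs to S if and only if x = 0, or p is even and x is the image in ZMod p of the natural number p/2. -/
/-!
Writing an element of the subgroup as `m • (p, 0) + n • (a, -1)`, its first coordinate vanishes
exactly when `p ∣ a n`, and its second coordinate is `-n`; so `(0, x)` lies in the subgroup iff
`a x = 0` in `ZMod p`. For `a = 2` these `x` form the `2`-torsion of `ZMod p`, i.e. the solutions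
of `-x = x`, which are `0` and, for even `p`, the residue of `p / 2`.
-/

theorem ZMod.two_mul_val_eq_iff {p : ℕ} [NeZero p] (x : ZMod p) :
    2 * x.val = p ↔ Even p ∧ x = ((p / 2 : ℕ) : ZMod p) := by
  constructor
  · intro h
    refine ⟨⟨x.val, by omega⟩, ?_⟩
    rw [show p / 2 = x.val by omega, ZMod.natCast_zmod_val]
  · rintro ⟨hev, rfl⟩
    have hlt : p / 2 < p := Nat.div_lt_self (Nat.pos_of_neZero p) one_lt_two
    rw [ZMod.val_natCast, Nat.mod_eq_of_lt hlt]
    exact Nat.two_mul_div_two_of_even hev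

theorem ZMod.two_mul_eq_zero_iff {p : ℕ} (x : ZMod p) :
    2 * x = 0 ↔ x = 0 ∨ (Even p ∧ x = ((p / 2 : ℕ) : ZMod p)) := by
  rw [two_mul, add_eq_zero_iff_neg_eq, ZMod.neg_eq_self_iff]
  rcases p.eq_zero_or_pos with rfl | hp
  · simp
  · have : NeZero p := ⟨hp.ne'⟩
    exact or_congr_right (ZMod.two_mul_val_eq_iff x)

theorem AddSubgroup.mk_zero_mem_closure_pair_iff {p : ℕ} (a : ℤ) (x : ZMod p) :
    ((0 : ℤ), x) ∈ AddSubgroup.closure {((p : ℤ), (0 : ZMod p)), (a, (-1 : ZMod p))} ↔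
      (a : ZMod p) * x = 0 := by
  rw [AddSubgroup.mem_closure_pair]
  simp only [Prod.smul_mk, Prod.mk_add_mk, smul_eq_mul, smul_zero, smul_neg, zsmul_eq_mul,
    mul_one, zero_add, Prod.mk.injEq]
  constructor
  · rintro ⟨m, n, hfst, rfl⟩
    have hcast : ((m * p + n * a : ℤ) : ZMod p) = 0 := by rw [hfst, Int.cast_zero]
    push_cast at hcast
    rw [ZMod.natCast_self, mul_zero, zero_add] at hcast
    linear_combination -hcast
  · obtain ⟨k, rfl⟩ := ZMod.intCast_surjective x
    intro h
    rw [← Int.cast_mul, ZMod.intCast_zmod_eq_zero_iff_dvd] at h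
    obtain ⟨c, hc⟩ := h
    exact ⟨c, -k, by linear_combination -hc, by push_cast; ring⟩

theorem mem_subgroup_iff_zero_or_half_general
    (p : ℕ)
    (S : AddSubgroup (ℤ × ZMod p))
    (hS : S = AddSubgroup.closure
      {((p : ℤ), (0 : ZMod p)), ((2 : ℤ), (-1 : ZMod p))}) :
    ∀ x : ZMod p, ((0 : ℤ), x) ∈ S ↔
      x = 0 ∨ (Even p ∧ x = ((p / 2 : ℕ) : ZMod p)) := by
  intro x
  rw [hS, AddSubgroup.mk_zero_mem_closure_pair_iff, Int.cast_ofNat, ZMod.two_mul_eq_zero_iff]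

theorem mem_subgroup_iff_zero_or_half
    (p : ℕ) (hp : 2 ≤ p)
    (S : AddSubgroup (ℤ × ZMod p))
    (hS : S = AddSubgroup.closure
      {((p : ℤ), (0 : ZMod p)), ((2 : ℤ), (-1 : ZMod p))}) :
    ∀ x : ZMod p, ((0 : ℤ), x) ∈ S ↔
      x = 0 ∨ (Even p ∧ x = ((p / 2 : ℕ) : ZMod p)) :=
  mem_subgroup_iff_zero_or_half_general p S hS
end
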